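/- For centered and standardized (X, Y) with correlation ρ and finite fourth moments, Var( XY − (ρ/2)(X² + Y²) ) = (1 + ρ²/2) μ_{(2,x),(2,y)} + ρ²(μ_{4,x} + μ_{4,y})/4 − ρ(μ_{(3,x),(1,y)} + μ_{(1,x),(3,y)}), where μ_{(p,x),(q,y)} = E(X^p Y^q), μ_{4,x} = E X⁴, μ_{4,y} = E Y⁴. -/

import Mathlib

/-!
With `E X² = E Y² = 1` and `E(XY) = ρ`, the variable `H = XY − (ρ/2)(X² + Y²)` is already centred,
so its variance is `E H²`; expanding the square expresses it through the mixed fourth moments, all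
of which are integrable once `X, Y ∈ L⁴` (by Hölder, `L⁴ · L⁴ ⊆ L²`).
-/

open MeasureTheory Filter
open scoped ENNReal

instance ENNReal.holderTriple_four_four_two : ENNReal.HolderTriple 4 4 2 :=
  ⟨by rw [← two_mul, show (4 : ℝ≥0∞) = 2 * 2 by norm_num, ENNReal.mul_inv (by simp) (by simp),
    ← mul_assoc, ENNReal.mul_inv_cancel (by simp) (by simp), one_mul]⟩

section

variable {Ω : Type*} [MeasurableSpace Ω] {μ : Measure Ω} {X Y : Ω → ℝ}

lemma MeasureTheory.MemLp.integrable_sq_mul_sq (hX : MemLp X 4 μ) (hY : MemLp Y 4 μ) :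
    Integrable (fun ω => X ω ^ 2 * Y ω ^ 2) μ := by
  simpa only [mul_pow] using (hY.mul' hX).integrable_sq

lemma MeasureTheory.MemLp.integrable_pow_four (hX : MemLp X 4 μ) : Integrable (fun ω => X ω ^ 4) μ := by
  convert hX.integrable_sq_mul_sq hX using 2
  ring

lemma integral_mul_sub_half_mul_sq_add_sq (hX : MemLp X 2 μ) (hY : MemLp Y 2 μ) (ρ : ℝ) :
    ∫ ω, (X ω * Y ω - (ρ / 2) * (X ω ^ 2 + Y ω ^ 2)) ∂μ
      = ∫ ω, X ω * Y ω ∂μ - (ρ / 2) * (∫ ω, X ω ^ 2 ∂μ + ∫ ω, Y ω ^ 2 ∂μ) := by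
  have hXY : Integrable (fun ω => X ω * Y ω) μ := hX.integrable_mul hY
  have hX2 := hX.integrable_sq
  have hY2 := hY.integrable_sq
  rw [integral_sub (by fun_prop) (by fun_prop), integral_const_mul, integral_add hX2 hY2]

lemma integral_sq_mul_sub_half_mul_sq_add_sq (hX : MemLp X 4 μ) (hY : MemLp Y 4 μ)
    (hX3Y : Integrable (fun ω => X ω ^ 3 * Y ω) μ) (hXY3 : Integrable (fun ω => X ω * Y ω ^ 3) μ)
    (ρ : ℝ) :
    ∫ ω, (X ω * Y ω - (ρ / 2) * (X ω ^ 2 + Y ω ^ 2)) ^ 2 ∂μ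
      = (1 + ρ ^ 2 / 2) * (∫ ω, X ω ^ 2 * Y ω ^ 2 ∂μ)
        + ρ ^ 2 * ((∫ ω, X ω ^ 4 ∂μ) + (∫ ω, Y ω ^ 4 ∂μ)) / 4
        - ρ * ((∫ ω, X ω ^ 3 * Y ω ∂μ) + (∫ ω, X ω * Y ω ^ 3 ∂μ)) := by
  have hX2Y2 := hX.integrable_sq_mul_sq hY
  have hX4 := hX.integrable_pow_four
  have hY4 := hY.integrable_pow_four
  have hexpand : ∀ ω, (X ω * Y ω - (ρ / 2) * (X ω ^ 2 + Y ω ^ 2)) ^ 2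
      = (1 + ρ ^ 2 / 2) * (X ω ^ 2 * Y ω ^ 2) + ρ ^ 2 / 4 * X ω ^ 4 + ρ ^ 2 / 4 * Y ω ^ 4
        - ρ * (X ω ^ 3 * Y ω) - ρ * (X ω * Y ω ^ 3) := fun ω => by ring
  simp_rw [hexpand]
  rw [integral_sub (by fun_prop) (by fun_prop), integral_sub (by fun_prop) (by fun_prop),
    integral_add (by fun_prop) (by fun_prop), integral_add (by fun_prop) (by fun_prop)]
  simp only [integral_const_mul]
  ring

end

theorem centered_H_variance_general {Ω : Type*} [MeasurableSpace Ω]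
    (P : Measure Ω) [IsProbabilityMeasure P] (X Y : Ω → ℝ) (ρ : ℝ)
    (hX4 : MemLp X 4 P) (hY4 : MemLp Y 4 P)
    (hX3Y : Integrable (fun ω => X ω ^ 3 * Y ω) P)
    (hXY3 : Integrable (fun ω => X ω * Y ω ^ 3) P)
    (hXvar : ∫ ω, X ω ^ 2 ∂P = 1) (hYvar : ∫ ω, Y ω ^ 2 ∂P = 1)
    (hρ : ∫ ω, X ω * Y ω ∂P = ρ) :
    ∫ ω, ((X ω * Y ω - (ρ / 2) * (X ω ^ 2 + Y ω ^ 2))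
        - ∫ ω', (X ω' * Y ω' - (ρ / 2) * (X ω' ^ 2 + Y ω' ^ 2)) ∂P) ^ 2 ∂P
      = (1 + ρ ^ 2 / 2) * (∫ ω, X ω ^ 2 * Y ω ^ 2 ∂P)
        + ρ ^ 2 * ((∫ ω, X ω ^ 4 ∂P) + (∫ ω, Y ω ^ 4 ∂P)) / 4
        - ρ * ((∫ ω, X ω ^ 3 * Y ω ∂P) + (∫ ω, X ω * Y ω ^ 3 ∂P)) := by
  have hmean : ∫ ω, (X ω * Y ω - (ρ / 2) * (X ω ^ 2 + Y ω ^ 2)) ∂P = 0 := by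
    rw [integral_mul_sub_half_mul_sq_add_sq (hX4.mono_exponent (by norm_num))
      (hY4.mono_exponent (by norm_num)), hXvar, hYvar, hρ]
    ring
  simp only [hmean, sub_zero]
  exact integral_sq_mul_sub_half_mul_sq_add_sq hX4 hY4 hX3Y hXY3 ρ

/-- for centered and standardized `(X,Y)` with correlation `ρ` and finite
fourth moments,
`Var(XY − (ρ/2)(X²+Y²)) = (1+ρ²/2)μ₂₂ + ρ²(μ₄ₓ+μ₄ᵧ)/4 − ρ(μ₃₁ + μ₁₃)`,
where `μ_{pq} = E(X^p Y^q)`. -/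
theorem centered_H_variance {Ω : Type*} [MeasurableSpace Ω]
    (P : Measure Ω) [IsProbabilityMeasure P] (X Y : Ω → ℝ) (ρ : ℝ)
    (hXmeas : Measurable X) (hYmeas : Measurable Y)
    (hX4 : MemLp X 4 P) (hY4 : MemLp Y 4 P)
    (hX3Y : Integrable (fun ω => X ω ^ 3 * Y ω) P)
    (hXY3 : Integrable (fun ω => X ω * Y ω ^ 3) P)
    (hXmean : ∫ ω, X ω ∂P = 0) (hYmean : ∫ ω, Y ω ∂P = 0)
    (hXvar : ∫ ω, X ω ^ 2 ∂P = 1) (hYvar : ∫ ω, Y ω ^ 2 ∂P = 1)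
    (hρ : ∫ ω, X ω * Y ω ∂P = ρ) :
    ∫ ω, ((X ω * Y ω - (ρ / 2) * (X ω ^ 2 + Y ω ^ 2))
        - ∫ ω', (X ω' * Y ω' - (ρ / 2) * (X ω' ^ 2 + Y ω' ^ 2)) ∂P) ^ 2 ∂P
      = (1 + ρ ^ 2 / 2) * (∫ ω, X ω ^ 2 * Y ω ^ 2 ∂P)
        + ρ ^ 2 * ((∫ ω, X ω ^ 4 ∂P) + (∫ ω, Y ω ^ 4 ∂P)) / 4
        - ρ * ((∫ ω, X ω ^ 3 * Y ω ∂P) + (∫ ω, X ω * Y ω ^ 3 ∂P)) :=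
  centered_H_variance_general P X Y ρ hX4 hY4 hX3Y hXY3 hXvar hYvar hρ
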